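/- arXiv:2202.09557 — 2 statements merged into one kernel-verified Lean document; each statement's English description precedes it below -/
import Mathlib

section
/- Let n, m ≥ 1. Let g ∈ ℝⁿ, let F̃ be a real n×m matrix, let u ∈ ℝᵐ, let h̃ ∈ ℝ, let e_F, e_g, e_h ≥ 0, and let α : ℝ → ℝ be monotone nondecreasing. Suppose e_g‖F̃ u‖ + (e_F‖g‖ + e_g·e_F)‖u‖ ≤ ⟨g, F̃ u⟩ + α(h̃ − e_h). Then for every real n×m matrix D with spectral norm ‖D‖ ≤ e_F, every d ∈ ℝⁿ with Euclidean norm ‖d‖ ≤ e_g, and every t ∈ ℝ with |t| ≤ e_h, one has ⟨g + d, (F̃ + D) u⟩ + α(h̃ + t) ≥ 0. -/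
open scoped RealInnerProductSpace

/-- The spectral norm of a real `n×m` matrix: the operator norm of the induced linear map
between Euclidean spaces. -/
noncomputable def specNorm {n m : ℕ} (A : Matrix (Fin n) (Fin m) ℝ) : ℝ :=
  ‖LinearMap.toContinuousLinearMap (Matrix.toEuclideanLin A)‖

/-- If `e_g‖F̃u‖ + (e_F‖g‖ + e_g e_F)‖u‖ ≤ ⟨g, F̃u⟩ + α(h̃ − e_h)`, then for all admissible
errors `D`, `d`, `t`, the robust safety constraint `⟨g + d, (F̃ + D)u⟩ + α(h̃ + t) ≥ 0` holds. -/
theorem stmt_7 (n m : ℕ) (hn : 1 ≤ n) (hm : 1 ≤ m)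
    (g : EuclideanSpace ℝ (Fin n)) (Ft : Matrix (Fin n) (Fin m) ℝ)
    (u : EuclideanSpace ℝ (Fin m)) (hTilde : ℝ) (eF eg eh : ℝ)
    (heF : 0 ≤ eF) (heg : 0 ≤ eg) (heh : 0 ≤ eh)
    (α : ℝ → ℝ) (hα : Monotone α)
    (h : eg * ‖Matrix.toEuclideanLin Ft u‖ + (eF * ‖g‖ + eg * eF) * ‖u‖
        ≤ ⟪g, Matrix.toEuclideanLin Ft u⟫ + α (hTilde - eh)) :
    ∀ D : Matrix (Fin n) (Fin m) ℝ, specNorm D ≤ eF →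
      ∀ d : EuclideanSpace ℝ (Fin n), ‖d‖ ≤ eg →
        ∀ t : ℝ, |t| ≤ eh →
          0 ≤ ⟪g + d, Matrix.toEuclideanLin (Ft + D) u⟫ + α (hTilde + t) := by
  intro D hD d hd t ht
  have hDu : ‖Matrix.toEuclideanLin D u‖ ≤ eF * ‖u‖ := by
    have := (LinearMap.toContinuousLinearMap (Matrix.toEuclideanLin D)).le_opNorm u
    simp only [LinearMap.coe_toContinuousLinearMap'] at this
    calc ‖Matrix.toEuclideanLin D u‖ ≤ specNorm D * ‖u‖ := this
      _ ≤ eF * ‖u‖ := by gcongr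
  have hmap : Matrix.toEuclideanLin (Ft + D) u
      = Matrix.toEuclideanLin Ft u + Matrix.toEuclideanLin D u := by
    simp [map_add]
  have h1 : |⟪g, Matrix.toEuclideanLin D u⟫| ≤ eF * ‖g‖ * ‖u‖ := by
    calc |⟪g, Matrix.toEuclideanLin D u⟫| ≤ ‖g‖ * ‖Matrix.toEuclideanLin D u‖ :=
          abs_real_inner_le_norm _ _
      _ ≤ ‖g‖ * (eF * ‖u‖) := by gcongr
      _ = eF * ‖g‖ * ‖u‖ := by ring
  have h2 : |⟪d, Matrix.toEuclideanLin Ft u⟫| ≤ eg * ‖Matrix.toEuclideanLin Ft u‖ := by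
    calc |⟪d, Matrix.toEuclideanLin Ft u⟫| ≤ ‖d‖ * ‖Matrix.toEuclideanLin Ft u‖ :=
          abs_real_inner_le_norm _ _
      _ ≤ eg * ‖Matrix.toEuclideanLin Ft u‖ := by gcongr
  have h3 : |⟪d, Matrix.toEuclideanLin D u⟫| ≤ eg * eF * ‖u‖ := by
    calc |⟪d, Matrix.toEuclideanLin D u⟫| ≤ ‖d‖ * ‖Matrix.toEuclideanLin D u‖ :=
          abs_real_inner_le_norm _ _
      _ ≤ eg * (eF * ‖u‖) := by
          apply mul_le_mul hd hDu (norm_nonneg _) heg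
      _ = eg * eF * ‖u‖ := by ring
  have hα' : α (hTilde - eh) ≤ α (hTilde + t) := by
    apply hα; linarith [neg_le_of_abs_le ht]
  rw [hmap, inner_add_left, inner_add_right, inner_add_right]
  have e1 := neg_le_of_abs_le h1
  have e2 := neg_le_of_abs_le h2
  have e3 := neg_le_of_abs_le h3
  linarith
end

section
/- Let n, m ≥ 1. Let w, g ∈ ℝⁿ, let F̃ be a real n×m matrix, let u ∈ ℝᵐ, let c, h̃, δ, p, q ∈ ℝ, let e_F, e_g, e_h ≥ 0, and let α : ℝ → ℝ be monotone nondecreasing. Suppose the following four constraints hold: (i) δ − (⟨w, F̃ u⟩ + c) ≥ e_F‖w‖‖u‖; (ii) p ≥ e_g‖F̃ u‖; (iii) q ≥ (e_F‖g‖ + e_g·e_F)‖u‖; (iv) ⟨g, F̃ u⟩ + α(h̃ − e_h) ≥ p + q. Then for every real n×m matrix D with spectral norm ‖D‖ ≤ e_F, every d ∈ ℝⁿ with ‖d‖ ≤ e_g, and every t ∈ ℝ with |t| ≤ e_h, both ⟨w, (F̃ + D) u⟩ + c ≤ δ and ⟨g + d, (F̃ + D) u⟩ + α(h̃ + t) ≥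 0 hold. -/
open scoped RealInnerProductSpace

section InnerPerturbation

variable {E : Type*} [NormedAddCommGroup E] [InnerProductSpace ℝ E]

lemma real_inner_add_right_le (w v e : E) : ⟪w, v + e⟫ ≤ ⟪w, v⟫ + ‖w‖ * ‖e‖ := by
  rw [inner_add_right]
  linarith [real_inner_le_norm w e]

lemma le_real_inner_add_add (g d v e : E) :
    ⟪g, v⟫ - (‖d‖ * ‖v‖ + (‖g‖ + ‖d‖) * ‖e‖) ≤ ⟪g + d, v + e⟫ := by
  have hdv : -(‖d‖ * ‖v‖) ≤ ⟪d, v⟫ := neg_le_of_abs_le (abs_real_inner_le_norm d v)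
  have hge : -(‖g + d‖ * ‖e‖) ≤ ⟪g + d, e⟫ := neg_le_of_abs_le (abs_real_inner_le_norm _ e)
  have hgd : ‖g + d‖ * ‖e‖ ≤ (‖g‖ + ‖d‖) * ‖e‖ := by gcongr; exact norm_add_le g d
  rw [inner_add_right, inner_add_left]
  linarith

end InnerPerturbation

lemma norm_toEuclideanLin_apply_le {n m : ℕ} (A : Matrix (Fin n) (Fin m) ℝ)
    (u : EuclideanSpace ℝ (Fin m)) :
    ‖Matrix.toEuclideanLin A u‖ ≤ specNorm A * ‖u‖ :=
  (LinearMap.toContinuousLinearMap (Matrix.toEuclideanLin A)).le_opNorm u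

theorem stmt_8_general (n m : ℕ)
    (w g : EuclideanSpace ℝ (Fin n)) (Ft : Matrix (Fin n) (Fin m) ℝ)
    (u : EuclideanSpace ℝ (Fin m)) (c hTilde δ p q : ℝ) (eF eg eh : ℝ)
    (α : ℝ → ℝ) (hα : Monotone α)
    (h1 : eF * ‖w‖ * ‖u‖ ≤ δ - (⟪w, Matrix.toEuclideanLin Ft u⟫ + c))
    (h2 : eg * ‖Matrix.toEuclideanLin Ft u‖ ≤ p)
    (h3 : (eF * ‖g‖ + eg * eF) * ‖u‖ ≤ q)
    (h4 : p + q ≤ ⟪g, Matrix.toEuclideanLin Ft u⟫ + α (hTilde - eh)) :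
    ∀ D : Matrix (Fin n) (Fin m) ℝ, specNorm D ≤ eF →
      ∀ d : EuclideanSpace ℝ (Fin n), ‖d‖ ≤ eg →
        ∀ t : ℝ, |t| ≤ eh →
          ⟪w, Matrix.toEuclideanLin (Ft + D) u⟫ + c ≤ δ ∧
            0 ≤ ⟪g + d, Matrix.toEuclideanLin (Ft + D) u⟫ + α (hTilde + t) := by
  intro D hD d hd t ht
  set v := Matrix.toEuclideanLin Ft u
  set e := Matrix.toEuclideanLin D u
  have hsplit : Matrix.toEuclideanLin (Ft + D) u = v + e := by simp [v, e]
  have he : ‖e‖ ≤ eF * ‖u‖ :=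
    (norm_toEuclideanLin_apply_le D u).trans (by gcongr)
  have hwe : ‖w‖ * ‖e‖ ≤ eF * ‖w‖ * ‖u‖ := by
    calc ‖w‖ * ‖e‖ ≤ ‖w‖ * (eF * ‖u‖) := by gcongr
      _ = eF * ‖w‖ * ‖u‖ := by ring
  have hdv : ‖d‖ * ‖v‖ ≤ p := le_trans (by gcongr) h2
  have hgde : (‖g‖ + ‖d‖) * ‖e‖ ≤ q := by
    calc (‖g‖ + ‖d‖) * ‖e‖ ≤ (‖g‖ + eg) * (eF * ‖u‖) := by
          gcongr; exact add_nonneg (norm_nonneg g) ((norm_nonneg d).trans hd)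
      _ = (eF * ‖g‖ + eg * eF) * ‖u‖ := by ring
      _ ≤ q := h3
  have hαt : α (hTilde - eh) ≤ α (hTilde + t) := hα (by linarith [neg_abs_le t])
  rw [hsplit]
  constructor
  · linarith [real_inner_add_right_le w v e]
  · linarith [le_real_inner_add_add g d v e]

/-- Robust CLF-CBF SOCP (Proposition 4): the four second-order cone constraints imply that
for every admissible realization of the errors, the robust stability constraint
`⟨w, (F̃ + D)u⟩ + c ≤ δ` and the robust safety constraint
`⟨g + d, (F̃ + D)u⟩ + α(h̃ + t) ≥ 0` both hold. -/
theorem stmt_8 (n m : ℕ) (hn : 1 ≤ n) (hm : 1 ≤ m)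
    (w g : EuclideanSpace ℝ (Fin n)) (Ft : Matrix (Fin n) (Fin m) ℝ)
    (u : EuclideanSpace ℝ (Fin m)) (c hTilde δ p q : ℝ) (eF eg eh : ℝ)
    (heF : 0 ≤ eF) (heg : 0 ≤ eg) (heh : 0 ≤ eh)
    (α : ℝ → ℝ) (hα : Monotone α)
    (h1 : eF * ‖w‖ * ‖u‖ ≤ δ - (⟪w, Matrix.toEuclideanLin Ft u⟫ + c))
    (h2 : eg * ‖Matrix.toEuclideanLin Ft u‖ ≤ p)
    (h3 : (eF * ‖g‖ + eg * eF) * ‖u‖ ≤ q)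
    (h4 : p + q ≤ ⟪g, Matrix.toEuclideanLin Ft u⟫ + α (hTilde - eh)) :
    ∀ D : Matrix (Fin n) (Fin m) ℝ, specNorm D ≤ eF →
      ∀ d : EuclideanSpace ℝ (Fin n), ‖d‖ ≤ eg →
        ∀ t : ℝ, |t| ≤ eh →
          ⟪w, Matrix.toEuclideanLin (Ft + D) u⟫ + c ≤ δ ∧
            0 ≤ ⟪g + d, Matrix.toEuclideanLin (Ft + D) u⟫ + α (hTilde + t) :=
  stmt_8_general n m w g Ft u c hTilde δ p q eF eg eh α hα h1 h2 h3 h4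
end
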